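/- Let F : ℝ → ℝ be monotone nondecreasing with 0 ≤ F(x) ≤ 1 for all x, let τ ∈ ℝ and y ∈ ℝ. Assume z ↦ F(z)² is integrable on (−∞, τ] and z ↦ (F(z) − 1)² is integrable on [v_τ(y), ∞). Then twCRPS_τ(F, y) = CRPS(F, v_τ(y)) − Δ_F, where Δ_F = ∫_{-∞}^{τ} F(z)² dz is a correction term depending only on F and τ. -/

import Mathlib

open MeasureTheory Set

/-- Threshold-weighted CRPS: `twCRPS_τ(F, y) = ∫_τ^∞ (F(z) − 𝟙{z ≥ y})² dz`. -/
noncomputable def twCRPS (F : ℝ → ℝ) (τ y : ℝ) : ℝ :=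
  ∫ z in Set.Ioi τ, (F z - if y ≤ z then (1 : ℝ) else 0) ^ 2

/-- CRPS: `CRPS(F, y) = ∫_{-∞}^∞ (F(z) − 𝟙{z ≥ y})² dz`. -/
noncomputable def CRPS (F : ℝ → ℝ) (y : ℝ) : ℝ :=
  ∫ z, (F z - if y ≤ z then (1 : ℝ) else 0) ^ 2

/-!
For `z > τ` the indicators `𝟙{z ≥ y}` and `𝟙{z ≥ max y τ}` agree, so `twCRPS_τ(F, y)` is the part
over `(τ, ∞)` of `CRPS(F, max y τ)`. Since `max y τ ≥ τ`, the complementary part over `(-∞, τ]`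
has integrand `F²` (up to the null set `{τ}`). Integrability over `(τ, ∞)` comes from the
hypothesis on `[max y τ, ∞)` and from the boundedness of a monotone `F` on `[τ, max y τ]`.
-/

noncomputable def crpsIntegrand (F : ℝ → ℝ) (y z : ℝ) : ℝ :=
  (F z - if y ≤ z then (1 : ℝ) else 0) ^ 2

section crpsIntegrand

variable {F : ℝ → ℝ} {y z : ℝ}

theorem crpsIntegrand_of_lt (hz : z < y) : crpsIntegrand F y z = F z ^ 2 := by
  simp [crpsIntegrand, not_le.mpr hz]

theorem crpsIntegrand_of_le (hz : y ≤ z) : crpsIntegrand F y z = (F z - 1) ^ 2 := by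
  simp [crpsIntegrand, hz]

theorem measurable_crpsIntegrand (hF : Measurable F) : Measurable (crpsIntegrand F y) :=
  (hF.sub (Measurable.ite measurableSet_Ici measurable_const measurable_const)).pow_const 2

theorem crpsIntegrand_le_of_mem_Icc {a b : ℝ} (hF : Monotone F) (hz : z ∈ Icc a b) :
    crpsIntegrand F y z ≤ (|F a| + |F b| + 1) ^ 2 := by
  have hFz : |F z| ≤ |F a| + |F b| := abs_le.mpr
    ⟨by linarith [neg_abs_le (F a), abs_nonneg (F b), hF hz.1],
      by linarith [le_abs_self (F b), abs_nonneg (F a), hF hz.2]⟩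
  have hind : |F z - if y ≤ z then (1 : ℝ) else 0| ≤ |F a| + |F b| + 1 := by
    refine (abs_sub _ _).trans (add_le_add hFz ?_)
    split_ifs <;> simp
  exact sq_le_sq' (abs_le.mp hind).1 (abs_le.mp hind).2

theorem integrableOn_Icc_crpsIntegrand (hF : Monotone F) (a b : ℝ) :
    IntegrableOn (crpsIntegrand F y) (Icc a b) := by
  refine IntegrableOn.of_bound measure_Icc_lt_top
    (measurable_crpsIntegrand hF.measurable).aestronglyMeasurable ((|F a| + |F b| + 1) ^ 2) ?_
  filter_upwards [ae_restrict_mem measurableSet_Icc] with z hz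
  rw [crpsIntegrand, Real.norm_of_nonneg (sq_nonneg _)]
  exact crpsIntegrand_le_of_mem_Icc hF hz

end crpsIntegrand

section thresholds

variable {F : ℝ → ℝ} {τ y : ℝ}

theorem twCRPS_eq_setIntegral_crpsIntegrand_max :
    twCRPS F τ y = ∫ z in Ioi τ, crpsIntegrand F (max y τ) z := by
  refine setIntegral_congr_fun measurableSet_Ioi fun z hz => ?_
  simp [crpsIntegrand, le_of_lt (mem_Ioi.mp hz)]

theorem setIntegral_Iic_crpsIntegrand (hτy : τ ≤ y) :
    ∫ z in Iic τ, crpsIntegrand F y z = ∫ z in Iic τ, F z ^ 2 := by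
  rw [integral_Iic_eq_integral_Iio, integral_Iic_eq_integral_Iio]
  exact setIntegral_congr_fun measurableSet_Iio fun z hz =>
    crpsIntegrand_of_lt (lt_of_lt_of_le hz hτy)

theorem integrableOn_Iic_crpsIntegrand (hτy : τ ≤ y)
    (hint : IntegrableOn (fun z => F z ^ 2) (Iic τ)) :
    IntegrableOn (crpsIntegrand F y) (Iic τ) := by
  rw [integrableOn_Iic_iff_integrableOn_Iio] at hint ⊢
  exact hint.congr_fun (fun z hz => (crpsIntegrand_of_lt (lt_of_lt_of_le hz hτy)).symm)
    measurableSet_Iio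

theorem integrableOn_Ioi_crpsIntegrand (hF : Monotone F) (hτy : τ ≤ y)
    (hint : IntegrableOn (fun z => (F z - 1) ^ 2) (Ici y)) :
    IntegrableOn (crpsIntegrand F y) (Ioi τ) := by
  have hright : IntegrableOn (crpsIntegrand F y) (Ioi y) :=
    (hint.mono_set Ioi_subset_Ici_self).congr_fun
      (fun z hz => (crpsIntegrand_of_le (le_of_lt hz)).symm) measurableSet_Ioi
  rw [← Ioc_union_Ioi_eq_Ioi hτy]
  exact ((integrableOn_Icc_crpsIntegrand hF τ y).mono_set Ioc_subset_Icc_self).union hright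

theorem CRPS_eq_setIntegral_Iic_add_setIntegral_Ioi
    (hIic : IntegrableOn (crpsIntegrand F y) (Iic τ))
    (hIoi : IntegrableOn (crpsIntegrand F y) (Ioi τ)) :
    CRPS F y = (∫ z in Iic τ, crpsIntegrand F y z) + ∫ z in Ioi τ, crpsIntegrand F y z :=
  (intervalIntegral.integral_Iic_add_Ioi hIic hIoi).symm

end thresholds

theorem twCRPS_eq_CRPS_sub_correction (F : ℝ → ℝ) (hF : Monotone F)
    (τ y : ℝ)
    (hint1 : IntegrableOn (fun z => (F z) ^ 2) (Set.Iic τ))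
    (hint2 : IntegrableOn (fun z => (F z - 1) ^ 2) (Set.Ici (max y τ))) :
    twCRPS F τ y = CRPS F (max y τ) - ∫ z in Set.Iic τ, (F z) ^ 2 := by
  have hτ : τ ≤ max y τ := le_max_right y τ
  rw [CRPS_eq_setIntegral_Iic_add_setIntegral_Ioi (integrableOn_Iic_crpsIntegrand hτ hint1)
      (integrableOn_Ioi_crpsIntegrand hF hτ hint2),
    setIntegral_Iic_crpsIntegrand hτ, twCRPS_eq_setIntegral_crpsIntegrand_max]
  ring
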